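/- arXiv:2012.00243 — 2 statements merged into one kernel-verified Lean document; each statement's English description precedes it below -/
import Mathlib

section
/- Let G be a finite directed multigraph and v a vertex of G. Suppose that no vertex reachable from v (including v itself) has two different cycles passing through it. If some path starting at v intersects at least one cycle, let d+1 (with d ≥ 0) be the maximum number of distinct cycles that a single path starting at v can intersect; then there exist constants C > D > 0 such that D·n^d ≤ P(v,n) ≤ C·n^d for all sufficiently large n. If no path starting at v intersects any cycle, then P(v,n) = 0 for all sufficiently large n. -/
/-- A finite directed multigraph: finitely many vertices, finitely many directed edges
(multiple edges between the same ordered pair of vertices are allowed). -/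
structure DMGraph where
  V : Type
  E : Type
  fintV : Fintype V
  fintE : Fintype E
  src : E → V
  tgt : E → V

attribute [instance] DMGraph.fintV DMGraph.fintE

namespace DMGraph

/-- `G.Path v w p` : the list of edges `p` is a path from `v` to `w`. -/
inductive Path (G : DMGraph) : G.V → G.V → List G.E → Prop
  | nil (v : G.V) : Path G v v []
  | cons (e : G.E) {w : G.V} {p : List G.E} :
      Path G (G.tgt e) w p → Path G (G.src e) w (e :: p)

/-- `w` is reachable from `v` by a (possibly empty) path. -/
def Reaches (G : DMGraph) (v w : G.V) : Prop := ∃ p : List G.E, G.Path v w p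

/-- `P(v,n)`: the number of different paths of length exactly `n` starting at `v`. -/
noncomputable def P (G : DMGraph) (v : G.V) (n : ℕ) : ℕ :=
  Nat.card {p : List G.E // p.length = n ∧ ∃ w, G.Path v w p}

/-- A cycle through `w`, written with base point `w`: a nonempty closed path from `w`
to `w` visiting no vertex twice (the visited vertices are the sources of its edges). -/
def IsCycleAt (G : DMGraph) (w : G.V) (p : List G.E) : Prop :=
  p ≠ [] ∧ G.Path w w p ∧ (p.map G.src).Nodup

/-- The set of vertices visited by a path `p` starting at `v`. -/
def Visits (G : DMGraph) (v : G.V) (p : List G.E) : Set G.V :=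
  insert v {x | ∃ e ∈ p, G.tgt e = x}

/-- `s` is the vertex set of some cycle of `G`. -/
def IsCycleSet (G : DMGraph) (s : Set G.V) : Prop :=
  ∃ (w : G.V) (p : List G.E), G.IsCycleAt w p ∧ s = {x | ∃ e ∈ p, G.src e = x}

/-- The number of distinct cycles (identified with their vertex sets) intersected by the
path `p` starting at `v`. -/
noncomputable def cyclesMet (G : DMGraph) (v : G.V) (p : List G.E) : ℕ :=
  Nat.card {s : Set G.V // G.IsCycleSet s ∧ (s ∩ G.Visits v p).Nonempty}

end DMGraph

/-! Under the hypothesis, the cycles reachable from `v` are pairwise vertex-disjoint, and an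
edge leaving such a cycle leads to a vertex that can never return to it. Let `K w` be the largest
number of cycles met by a path starting at `w`.

Upper bound `P(w,n) = O(n ^ (K w - 1))`, by induction on the set of vertices reachable from `w`.
If `w` lies on no cycle, `P(w,n+1)` is the sum of `P(u,n)` over the successors `u` of `w`, which
cannot reach back to `w`. If `w` lies on a cycle, a path from `w` runs around the cycle and then
leaves it through an exit edge `e`, so `P(w,n) ≤ 1 + ∑ₑ ∑_{t<n} P(tgt e, t)` with
`K (tgt e) < K w`; when `K (tgt e) = 0`, no path from `tgt e` is longer than `|V|`.

Lower bound `P(w,n) = Ω(n ^ j)` when some path from `w` meets `j + 1` cycles, by induction along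
that path. At the edge `e` where it leaves a cycle of length `L` for good,
`P(x, m + L) ≥ P(x, m) + P(tgt e, m + L - 1)`, and summing this over about `n / 2L` turns around
the cycle raises the exponent by one. -/

open Finset Filter

def PolyBoundedAbove (f : ℕ → ℕ) (k : ℕ) : Prop :=
  ∃ C, ∀ n, f n ≤ C * (n + 1) ^ k

def PolyBoundedBelow (f : ℕ → ℕ) (j : ℕ) : Prop :=
  ∃ c, ∀ᶠ n in atTop, n ^ j ≤ c * f n

section Growth

variable {f g : ℕ → ℕ} {j k l : ℕ}

namespace PolyBoundedAbove

lemma mono (hf : PolyBoundedAbove f k) (hgf : ∀ n, g n ≤ f n) (hkl : k ≤ l) :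
    PolyBoundedAbove g l := by
  obtain ⟨C, hC⟩ := hf
  exact ⟨C, fun n => (hgf n).trans <| (hC n).trans <|
    Nat.mul_le_mul_left C <| Nat.pow_le_pow_right n.succ_pos hkl⟩

lemma const (c k : ℕ) : PolyBoundedAbove (fun _ => c) k :=
  ⟨c, fun n => Nat.le_mul_of_pos_right c (Nat.pow_pos n.succ_pos)⟩

lemma add (hf : PolyBoundedAbove f k) (hg : PolyBoundedAbove g k) :
    PolyBoundedAbove (fun n => f n + g n) k := by
  obtain ⟨C, hC⟩ := hf
  obtain ⟨D, hD⟩ := hg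
  exact ⟨C + D, fun n => by rw [add_mul]; exact add_le_add (hC n) (hD n)⟩

lemma sum {ι : Type*} {s : Finset ι} {f : ι → ℕ → ℕ}
    (h : ∀ i ∈ s, PolyBoundedAbove (f i) k) :
    PolyBoundedAbove (fun n => ∑ i ∈ s, f i n) k := by
  choose! C hC using h
  exact ⟨∑ i ∈ s, C i, fun n => by
    rw [Finset.sum_mul]; exact Finset.sum_le_sum fun i hi => hC i hi n⟩

lemma of_succ (h : PolyBoundedAbove (fun n => f (n + 1)) k) : PolyBoundedAbove f k := by
  obtain ⟨C, hC⟩ := h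
  refine ⟨C + f 0, fun n => ?_⟩
  cases n with
  | zero => simp
  | succ n =>
    calc f (n + 1) ≤ C * (n + 1) ^ k := hC n
      _ ≤ (C + f 0) * (n + 1 + 1) ^ k := by gcongr <;> omega

lemma sum_range (h : PolyBoundedAbove f k) :
    PolyBoundedAbove (fun n => ∑ t ∈ range n, f t) (k + 1) := by
  obtain ⟨C, hC⟩ := h
  refine ⟨C, fun n => ?_⟩
  calc ∑ t ∈ range n, f t ≤ ∑ _t ∈ range n, C * (n + 1) ^ k :=
        sum_le_sum fun t ht => (hC t).trans (by gcongr; exact (mem_range.1 ht).le)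
    _ = n * (C * (n + 1) ^ k) := by rw [sum_const, card_range, smul_eq_mul]
    _ ≤ (n + 1) * (C * (n + 1) ^ k) := by gcongr; omega
    _ = C * (n + 1) ^ (k + 1) := by ring

end PolyBoundedAbove

lemma polyBoundedAbove_sum_range_of_eq_zero {N : ℕ} (h : ∀ t, N ≤ t → f t = 0) :
    PolyBoundedAbove (fun n => ∑ t ∈ range n, f t) 0 := by
  refine ⟨∑ t ∈ range N, f t, fun n => ?_⟩
  calc ∑ t ∈ range n, f t = ∑ t ∈ range n with t < N, f t :=
        (sum_filter_of_ne fun t _ ht => not_le.1 fun hN => ht (h t hN)).symm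
    _ ≤ ∑ t ∈ range N, f t := sum_le_sum_of_subset fun t ht => mem_range.2 (mem_filter.1 ht).2
    _ = (∑ t ∈ range N, f t) * (n + 1) ^ 0 := by rw [pow_zero, mul_one]

namespace PolyBoundedBelow

lemma of_le_succ (hf : PolyBoundedBelow f j) (hfg : ∀ n, f n ≤ g (n + 1)) :
    PolyBoundedBelow g j := by
  obtain ⟨c, hc⟩ := hf
  refine ⟨2 ^ j * c, ?_⟩
  filter_upwards [(tendsto_sub_atTop_nat 1).eventually hc, eventually_ge_atTop 2] with n hn h2
  obtain ⟨m, rfl⟩ : ∃ m, n = m + 1 := ⟨n - 1, by omega⟩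
  calc (m + 1) ^ j ≤ (2 * m) ^ j := Nat.pow_le_pow_left (by omega) j
    _ = 2 ^ j * m ^ j := mul_pow 2 m j
    _ ≤ 2 ^ j * (c * f m) := by simpa using Nat.mul_le_mul_left (2 ^ j) hn
    _ ≤ 2 ^ j * c * g (m + 1) := by rw [← mul_assoc]; exact Nat.mul_le_mul_left _ (hfg m)

lemma pump {L : ℕ} (hf : PolyBoundedBelow f j)
    (hfg : ∀ m, g m + f (m + L) ≤ g (m + (L + 1))) : PolyBoundedBelow g (j + 1) := by
  have hiter : ∀ m k, ∑ i ∈ range k, f (m + L + i * (L + 1)) ≤ g (m + k * (L + 1)) := by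
    intro m k
    induction k with
    | zero => simp
    | succ k ih =>
      have h := hfg (m + k * (L + 1))
      rw [show m + k * (L + 1) + L = m + L + k * (L + 1) by ring,
        show m + k * (L + 1) + (L + 1) = m + (k + 1) * (L + 1) by ring] at h
      rw [sum_range_succ]
      linarith
  obtain ⟨c, hc⟩ := hf
  obtain ⟨N, hN⟩ := eventually_atTop.1 hc
  refine ⟨4 * (L + 1) * 2 ^ j * c, eventually_atTop.2 ⟨2 * N + 2 * (L + 1), fun n hn => ?_⟩⟩
  -- write `n = m + k (L + 1)` with `k ≈ n / (2 (L + 1))`, so that `m ≥ n / 2`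
  have hk : 1 ≤ n / (2 * (L + 1)) := (Nat.le_div_iff_mul_le (by positivity)).2 (by omega)
  have hkn := Nat.div_mul_le_self n (2 * (L + 1))
  have hnk := Nat.lt_div_mul_add (a := n) (b := 2 * (L + 1)) (by positivity)
  set k := n / (2 * (L + 1))
  set m := n - k * (L + 1)
  replace hkn : 2 * (k * (L + 1)) ≤ n := by linarith
  replace hnk : n ≤ 4 * (L + 1) * k := by nlinarith
  have hmN : N ≤ m := by omega
  have hsum : k * m ^ j ≤ c * g n := by
    calc k * m ^ j = ∑ _i ∈ range k, m ^ j := by rw [sum_const, card_range, smul_eq_mul]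
      _ ≤ ∑ i ∈ range k, c * f (m + L + i * (L + 1)) := sum_le_sum fun i _ =>
          (Nat.pow_le_pow_left (by omega) j).trans (hN _ (by omega))
      _ = c * ∑ i ∈ range k, f (m + L + i * (L + 1)) := (mul_sum _ _ _).symm
      _ ≤ c * g (m + k * (L + 1)) := Nat.mul_le_mul_left c (hiter m k)
      _ = c * g n := by congr 2; omega
  calc n ^ (j + 1) = n ^ j * n := pow_succ n j
    _ ≤ (2 * m) ^ j * (4 * (L + 1) * k) := by gcongr; omega
    _ = 4 * (L + 1) * 2 ^ j * (k * m ^ j) := by ring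
    _ ≤ 4 * (L + 1) * 2 ^ j * c * g n := by rw [mul_assoc _ c]; gcongr

end PolyBoundedBelow

lemma polyBoundedBelow_zero_of_pos (h : ∀ n, 0 < g n) : PolyBoundedBelow g 0 :=
  ⟨1, Eventually.of_forall fun n => by rw [pow_zero, one_mul]; exact h n⟩

lemma exists_bounds_of_polyBounded {d : ℕ} (hup : PolyBoundedAbove f d)
    (hlow : PolyBoundedBelow f d) :
    ∃ C D : ℝ, C > D ∧ D > 0 ∧ ∀ᶠ n : ℕ in atTop,
      D * (n : ℝ) ^ d ≤ (f n : ℝ) ∧ (f n : ℝ) ≤ C * (n : ℝ) ^ d := by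
  obtain ⟨C, hC⟩ := hup
  obtain ⟨c, hc⟩ := hlow
  have hD : (0 : ℝ) < 1 / (c + 1) := by positivity
  refine ⟨C * 2 ^ d + 2, 1 / (c + 1), ?_, hD, ?_⟩
  · have h1 : 1 / ((c : ℝ) + 1) ≤ 1 :=
      div_le_one_of_le₀ (by linarith [c.cast_nonneg (α := ℝ)]) (by positivity)
    have h2 : (0 : ℝ) ≤ C * 2 ^ d := by positivity
    linarith
  filter_upwards [hc, eventually_ge_atTop 1] with n hn hn1
  constructor
  · rw [div_mul_eq_mul_div, one_mul, div_le_iff₀ (by positivity)]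
    have : (n : ℝ) ^ d ≤ c * f n := by exact_mod_cast hn
    nlinarith [(f n).cast_nonneg (α := ℝ)]
  · have hnat : f n ≤ C * 2 ^ d * n ^ d :=
      calc f n ≤ C * (n + 1) ^ d := hC n
        _ ≤ C * (2 * n) ^ d := by gcongr; omega
        _ = C * 2 ^ d * n ^ d := by ring
    have : (f n : ℝ) ≤ C * 2 ^ d * n ^ d := by exact_mod_cast hnat
    nlinarith [show (0 : ℝ) ≤ (n : ℝ) ^ d by positivity]

end Growth

lemma List.exists_eq_append_cons_append_cons_of_not_nodup_map {α β : Type*} (f : α → β)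
    {l : List α} (h : ¬ (l.map f).Nodup) :
    ∃ l₁ a l₂ b l₃, l = l₁ ++ a :: l₂ ++ b :: l₃ ∧ f a = f b := by
  induction l with
  | nil => simp at h
  | cons x t ih =>
    by_cases hx : f x ∈ t.map f
    · obtain ⟨b, hb, hfb⟩ := List.mem_map.1 hx
      obtain ⟨s, u, rfl⟩ := List.append_of_mem hb
      exact ⟨[], x, s, b, u, by simp, hfb.symm⟩
    · obtain ⟨l₁, a, l₂, b, l₃, rfl, hab⟩ :=
        ih fun hn => h (by simpa [List.nodup_cons, hx] using hn)
      exact ⟨x :: l₁, a, l₂, b, l₃, by simp, hab⟩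

namespace DMGraph

open scoped Classical

variable {G : DMGraph}

lemma path_nil_iff {a b : G.V} : G.Path a b [] ↔ a = b :=
  ⟨fun h => by cases h; rfl, fun h => h ▸ .nil a⟩

lemma path_cons_iff {a b : G.V} {e : G.E} {p : List G.E} :
    G.Path a b (e :: p) ↔ a = G.src e ∧ G.Path (G.tgt e) b p :=
  ⟨fun h => by cases h; exact ⟨rfl, by assumption⟩, fun ⟨h, hp⟩ => h ▸ .cons e hp⟩

lemma path_append_iff {a c : G.V} {p q : List G.E} :
    G.Path a c (p ++ q) ↔ ∃ b, G.Path a b p ∧ G.Path b c q := by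
  induction p generalizing a with
  | nil => simp [path_nil_iff]
  | cons e p ih => simp [path_cons_iff, ih, and_assoc]

lemma Path.append {a b c : G.V} {p q : List G.E} (hp : G.Path a b p) (hq : G.Path b c q) :
    G.Path a c (p ++ q) :=
  path_append_iff.2 ⟨b, hp, hq⟩

lemma Path.reaches {a b : G.V} {p : List G.E} (hp : G.Path a b p) : G.Reaches a b := ⟨p, hp⟩

lemma Reaches.refl (a : G.V) : G.Reaches a a := ⟨[], .nil a⟩

lemma Reaches.trans {a b c : G.V} (hab : G.Reaches a b) (hbc : G.Reaches b c) :
    G.Reaches a c :=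
  let ⟨_, hp⟩ := hab; let ⟨_, hq⟩ := hbc; (hp.append hq).reaches

lemma reaches_tgt (e : G.E) : G.Reaches (G.src e) (G.tgt e) := ⟨[e], .cons e (.nil _)⟩

lemma ncard_reaches_lt {a b : G.V} (hab : G.Reaches a b) (hba : ¬ G.Reaches b a) :
    {x | G.Reaches b x}.ncard < {x | G.Reaches a x}.ncard :=
  Set.ncard_lt_ncard ⟨fun _ hx => hab.trans hx, fun h => hba (h (Reaches.refl a))⟩

lemma visits_cons (e : G.E) (p : List G.E) :
    G.Visits (G.src e) (e :: p) = insert (G.src e) (G.Visits (G.tgt e) p) := by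
  ext x
  simp only [Visits, Set.mem_insert_iff, Set.mem_ofPred_eq, List.mem_cons]
  grind

lemma reaches_of_mem_visits {a b x : G.V} {p : List G.E} (hp : G.Path a b p)
    (hx : x ∈ G.Visits a p) : G.Reaches a x := by
  induction p generalizing a with
  | nil =>
    simp [Visits] at hx
    exact hx ▸ .refl a
  | cons e p ih =>
    obtain ⟨rfl, htl⟩ := path_cons_iff.1 hp
    rw [visits_cons] at hx
    obtain rfl | hx := hx
    exacts [.refl _, (reaches_tgt e).trans (ih htl hx)]

lemma src_mem_visits {a b : G.V} {p : List G.E} (hp : G.Path a b p) {e : G.E} (he : e ∈ p) :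
    G.src e ∈ G.Visits a p := by
  induction p generalizing a with
  | nil => simp at he
  | cons f p ih =>
    obtain ⟨rfl, htl⟩ := path_cons_iff.1 hp
    rw [visits_cons]
    obtain rfl | he := List.mem_cons.1 he
    exacts [Set.mem_insert _ _, Set.mem_insert_of_mem _ (ih htl he)]

lemma visits_subset_append {a b : G.V} {p : List G.E} (hp : G.Path a b p) (q : List G.E) :
    G.Visits b q ⊆ G.Visits a (p ++ q) := by
  induction p generalizing a with
  | nil => obtain rfl := path_nil_iff.1 hp; rfl
  | cons e p ih =>
    obtain ⟨rfl, htl⟩ := path_cons_iff.1 hp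
    rw [List.cons_append, visits_cons]
    exact (ih htl).trans (Set.subset_insert _ _)

abbrev PathsFrom (G : DMGraph) (w : G.V) (n : ℕ) : Type :=
  {p : List G.E // p.length = n ∧ ∃ y, G.Path w y p}

instance (w : G.V) (n : ℕ) : Finite (G.PathsFrom w n) :=
  (List.finite_length_eq G.E n).subset (fun _ hp => hp.1) |>.to_subtype

lemma P_zero (w : G.V) : G.P w 0 = 1 :=
  Nat.card_eq_one_iff_exists.2 ⟨⟨[], rfl, w, .nil w⟩, fun ⟨p, hp, _⟩ => by
    cases List.length_eq_zero_iff.1 hp; rfl⟩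

lemma P_succ (w : G.V) (n : ℕ) :
    G.P w (n + 1) = ∑ e with G.src e = w, G.P (G.tgt e) n := by
  let F : (Σ e : {e : G.E // G.src e = w}, G.PathsFrom (G.tgt e) n) → G.PathsFrom w (n + 1) :=
    fun q => ⟨q.1.1 :: q.2.1, by simp [q.2.2.1],
      q.2.2.2.imp fun _ hy => path_cons_iff.2 ⟨q.1.2.symm, hy⟩⟩
  have hF : F.Bijective := by
    refine ⟨?_, ?_⟩
    · rintro ⟨⟨e, _⟩, p, _⟩ ⟨⟨e', _⟩, p', _⟩ h
      simp only [F, Subtype.mk.injEq, List.cons.injEq] at h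
      obtain ⟨rfl, rfl⟩ := h
      rfl
    · rintro ⟨_ | ⟨e, p⟩, hl, y, hy⟩
      · simp at hl
      · obtain ⟨he, hp⟩ := path_cons_iff.1 hy
        exact ⟨⟨⟨e, he.symm⟩, p, by simpa using hl, y, hp⟩, rfl⟩
  rw [P, ← Nat.card_eq_of_bijective F hF, Nat.card_sigma]
  exact (Finset.sum_subtype _ (fun e => by simp) (fun e => G.P (G.tgt e) n)).symm

lemma P_le_P_append {a b : G.V} {p : List G.E} (hp : G.Path a b p) (n : ℕ) :
    G.P b n ≤ G.P a (p.length + n) :=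
  Nat.card_le_card_of_injective
    (fun q => ⟨p ++ q.1, by simp [q.2.1], q.2.2.imp fun _ hq => hp.append hq⟩)
    fun q q' h => Subtype.ext (List.append_cancel_left (congrArg Subtype.val h))

lemma P_le_P_succ (e : G.E) (n : ℕ) : G.P (G.tgt e) n ≤ G.P (G.src e) (n + 1) := by
  simpa [add_comm] using P_le_P_append (.cons e (.nil _)) n

lemma P_add_P_le_P_succ {e f : G.E} (hef : G.src e = G.src f) (hne : e ≠ f) (n : ℕ) :
    G.P (G.tgt e) n + G.P (G.tgt f) n ≤ G.P (G.src e) (n + 1) := by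
  calc G.P (G.tgt e) n + G.P (G.tgt f) n = ∑ x ∈ {e, f}, G.P (G.tgt x) n :=
        (Finset.sum_pair (f := fun x => G.P (G.tgt x) n) hne).symm
    _ ≤ G.P (G.src e) (n + 1) := by
      rw [P_succ]
      refine Finset.sum_le_sum_of_subset fun x hx => ?_
      rcases Finset.mem_insert.1 hx with rfl | hx
      · simp
      · simp [Finset.mem_singleton.1 hx, hef]

def srcSet (G : DMGraph) (c : List G.E) : Set G.V := {x | ∃ e ∈ c, G.src e = x}

lemma srcSet_perm {c c' : List G.E} (h : c.Perm c') : G.srcSet c = G.srcSet c' := by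
  simp only [srcSet, h.mem_iff]

namespace IsCycleAt

variable {w : G.V} {c : List G.E}

lemma mem_srcSet (hc : G.IsCycleAt w c) : w ∈ G.srcSet c := by
  obtain ⟨hne, hp, -⟩ := hc
  obtain ⟨e, c, rfl⟩ := List.exists_cons_of_ne_nil hne
  exact ⟨e, List.mem_cons_self, (path_cons_iff.1 hp).1.symm⟩

lemma isCycleSet (hc : G.IsCycleAt w c) : G.IsCycleSet (G.srcSet c) := ⟨w, c, hc, rfl⟩

lemma tgt_mem_srcSet (hc : G.IsCycleAt w c) {e : G.E} (he : e ∈ c) :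
    G.tgt e ∈ G.srcSet c := by
  obtain ⟨c₁, c₂, rfl⟩ := List.append_of_mem he
  obtain ⟨_, -, hp⟩ := path_append_iff.1 hc.2.1
  obtain ⟨-, hp⟩ := path_cons_iff.1 hp
  cases c₂ with
  | nil => rw [path_nil_iff.1 hp]; exact hc.mem_srcSet
  | cons f c₂ => exact ⟨f, by simp, (path_cons_iff.1 hp).1.symm⟩

lemma rotate (hc : G.IsCycleAt w c) {z : G.V} (hz : z ∈ G.srcSet c) :
    ∃ c', G.IsCycleAt z c' ∧ c'.Perm c := by
  obtain ⟨f, hf, rfl⟩ := hz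
  obtain ⟨c₁, c₂, rfl⟩ := List.append_of_mem hf
  obtain ⟨_, hp₁, hp₂⟩ := path_append_iff.1 hc.2.1
  obtain rfl := (path_cons_iff.1 hp₂).1
  have hperm : (f :: c₂ ++ c₁).Perm (c₁ ++ f :: c₂) := List.perm_append_comm
  exact ⟨f :: c₂ ++ c₁, ⟨by simp, hp₂.append hp₁, (hperm.map G.src).nodup_iff.2 hc.2.2⟩,
    hperm⟩

lemma reaches_base (hc : G.IsCycleAt w c) {z : G.V} (hz : z ∈ G.srcSet c) :
    G.Reaches z w := by
  obtain ⟨f, hf, rfl⟩ := hz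
  obtain ⟨c₁, c₂, rfl⟩ := List.append_of_mem hf
  obtain ⟨_, -, hp⟩ := path_append_iff.1 hc.2.1
  obtain rfl := (path_cons_iff.1 hp).1
  exact hp.reaches

lemma base_reaches (hc : G.IsCycleAt w c) {z : G.V} (hz : z ∈ G.srcSet c) :
    G.Reaches w z :=
  let ⟨_, hc', hperm⟩ := hc.rotate hz
  hc'.reaches_base (srcSet_perm hperm ▸ hc.mem_srcSet)

lemma eq_of_mem_of_src_eq (hc : G.IsCycleAt w c) {e f : G.E} (he : e ∈ c) (hf : f ∈ c)
    (hef : G.src e = G.src f) : e = f :=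
  List.inj_on_of_nodup_map hc.2.2 he hf hef

end IsCycleAt

lemma exists_isCycleAt_cons {x : G.V} {e : G.E} {q : List G.E} (hq : G.Path x x (e :: q)) :
    ∃ r, G.IsCycleAt x (e :: r) := by
  induction hn : q.length using Nat.strong_induction_on generalizing q with
  | _ n ih =>
    by_cases hnd : ((e :: q).map G.src).Nodup
    · exact ⟨q, by simp, hq, hnd⟩
    -- otherwise cut out the piece between two edges with the same source; `e` survives
    obtain ⟨l₁, a, l₂, b, l₃, hsplit, hab⟩ :=
      List.exists_eq_append_cons_append_cons_of_not_nodup_map G.src hnd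
    rw [hsplit] at hq
    obtain ⟨_, hp₁₂, hp₃⟩ := path_append_iff.1 hq
    obtain ⟨_, hp₁, hp₂⟩ := path_append_iff.1 hp₁₂
    obtain rfl := (path_cons_iff.1 hp₂).1
    obtain rfl := (path_cons_iff.1 hp₃).1
    cases l₁ with
    | nil =>
      obtain ⟨rfl, rfl⟩ : e = a ∧ q = l₂ ++ b :: l₃ := by simpa using hsplit
      obtain rfl : G.src e = x := (path_nil_iff.1 hp₁).symm
      rw [← hab] at hp₂
      exact ih l₂.length (by simp [← hn]) hp₂ rfl
    | cons f l₁ =>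
      obtain ⟨rfl, rfl⟩ : e = f ∧ q = l₁ ++ a :: l₂ ++ b :: l₃ := by simpa using hsplit
      rw [← hab] at hp₃
      exact ih (l₁ ++ b :: l₃).length (by simp [← hn]) (hp₁.append hp₃) rfl

def metSet (G : DMGraph) (w : G.V) (p : List G.E) : Set (Set G.V) :=
  {s | G.IsCycleSet s ∧ (s ∩ G.Visits w p).Nonempty}

def cyclesThrough (G : DMGraph) (w : G.V) : Set (Set G.V) := {s | G.IsCycleSet s ∧ w ∈ s}

lemma cyclesMet_eq_ncard (w : G.V) (p : List G.E) : G.cyclesMet w p = (G.metSet w p).ncard :=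
  Nat.card_coe_set_eq _

lemma metSet_nil (w : G.V) : G.metSet w [] = G.cyclesThrough w := by
  ext s
  simp [metSet, cyclesThrough, Visits]

lemma metSet_cons (e : G.E) (p : List G.E) :
    G.metSet (G.src e) (e :: p) = G.cyclesThrough (G.src e) ∪ G.metSet (G.tgt e) p := by
  ext s
  simp only [metSet, cyclesThrough, visits_cons, Set.mem_union, Set.mem_ofPred_eq]
  by_cases hs : G.src e ∈ s
  · simp only [Set.inter_insert_of_mem hs, Set.insert_nonempty, hs]
    tauto
  · simp [hs, Set.inter_insert_of_notMem hs]

lemma cyclesMet_le_append {a b : G.V} {p : List G.E} (hp : G.Path a b p) (q : List G.E) :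
    G.cyclesMet b q ≤ G.cyclesMet a (p ++ q) := by
  rw [cyclesMet_eq_ncard, cyclesMet_eq_ncard]
  exact Set.ncard_le_ncard (fun s ⟨hs, hne⟩ => ⟨hs, hne.mono
    (Set.inter_subset_inter_right _ (visits_subset_append hp q))⟩) (Set.toFinite _)

lemma cyclesMet_pos_of_card_lt {w y : G.V} {p : List G.E} (hp : G.Path w y p)
    (hlen : Fintype.card G.V < p.length) : 0 < G.cyclesMet w p := by
  have hnd : ¬ (p.map G.src).Nodup := fun h => by simpa using (h.length_le_card.trans_lt hlen)
  obtain ⟨l₁, a, l₂, b, l₃, rfl, hab⟩ :=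
    List.exists_eq_append_cons_append_cons_of_not_nodup_map G.src hnd
  obtain ⟨_, hp₁₂, hp₃⟩ := path_append_iff.1 hp
  obtain ⟨_, -, hp₂⟩ := path_append_iff.1 hp₁₂
  obtain rfl := (path_cons_iff.1 hp₂).1
  obtain rfl := (path_cons_iff.1 hp₃).1
  rw [← hab] at hp₂
  obtain ⟨r, hr⟩ := exists_isCycleAt_cons hp₂
  rw [cyclesMet_eq_ncard]
  exact (Set.ncard_pos (Set.toFinite _)).2 ⟨_, hr.isCycleSet, _, hr.mem_srcSet,
    src_mem_visits hp (by simp)⟩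

noncomputable def maxCyclesMet (G : DMGraph) (w : G.V) : ℕ :=
  sSup {m | ∃ p y, G.Path w y p ∧ G.cyclesMet w p = m}

lemma bddAbove_cyclesMet (w : G.V) :
    BddAbove {m | ∃ p y, G.Path w y p ∧ G.cyclesMet w p = m} :=
  ⟨Nat.card (Set G.V), by
    rintro _ ⟨p, y, -, rfl⟩
    exact Nat.card_le_card_of_injective Subtype.val Subtype.val_injective⟩

lemma cyclesMet_le_maxCyclesMet {w y : G.V} {p : List G.E} (hp : G.Path w y p) :
    G.cyclesMet w p ≤ G.maxCyclesMet w :=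
  le_csSup (bddAbove_cyclesMet w) ⟨p, y, hp, rfl⟩

lemma exists_cyclesMet_eq_maxCyclesMet (w : G.V) :
    ∃ p y, G.Path w y p ∧ G.cyclesMet w p = G.maxCyclesMet w :=
  Nat.sSup_mem (s := {m | ∃ p y, G.Path w y p ∧ G.cyclesMet w p = m})
    ⟨_, [], w, .nil w, rfl⟩ (bddAbove_cyclesMet w)

lemma maxCyclesMet_le {w : G.V} {m : ℕ} (h : ∀ p y, G.Path w y p → G.cyclesMet w p ≤ m) :
    G.maxCyclesMet w ≤ m :=
  let ⟨p, y, hp, hm⟩ := exists_cyclesMet_eq_maxCyclesMet w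
  hm ▸ h p y hp

lemma maxCyclesMet_le_of_reaches {a b : G.V} (h : G.Reaches a b) :
    G.maxCyclesMet b ≤ G.maxCyclesMet a :=
  let ⟨_, hp⟩ := h
  maxCyclesMet_le fun q _ hq =>
    (cyclesMet_le_append hp q).trans (cyclesMet_le_maxCyclesMet (hp.append hq))

lemma P_eq_zero_of_cyclesMet_eq_zero {w : G.V}
    (h : ∀ p y, G.Path w y p → G.cyclesMet w p = 0) {n : ℕ} (hn : Fintype.card G.V < n) :
    G.P w n = 0 :=
  Nat.card_eq_zero.2 <| .inl ⟨fun ⟨p, hl, y, hp⟩ =>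
    (cyclesMet_pos_of_card_lt hp (hl ▸ hn)).ne' (h p y hp)⟩

lemma polyBoundedAbove_sum_range_P_of_maxCyclesMet_eq_zero {w : G.V}
    (h : G.maxCyclesMet w = 0) : PolyBoundedAbove (fun n => ∑ t ∈ range n, G.P w t) 0 :=
  polyBoundedAbove_sum_range_of_eq_zero fun _ hn => P_eq_zero_of_cyclesMet_eq_zero
    (fun _ _ hp => Nat.eq_zero_of_le_zero (h ▸ cyclesMet_le_maxCyclesMet hp)) hn

noncomputable def exits (G : DMGraph) (c : List G.E) : Finset G.E :=
  Finset.univ.filter fun e => G.src e ∈ G.srcSet c ∧ e ∉ c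

lemma mem_exits {c : List G.E} {e : G.E} : e ∈ G.exits c ↔ G.src e ∈ G.srcSet c ∧ e ∉ c := by
  simp [exits]

namespace IsCycleAt

variable {w : G.V} {c : List G.E}

lemma P_pos (hc : G.IsCycleAt w c) (n : ℕ) : 0 < G.P w n := by
  suffices ∀ z ∈ G.srcSet c, 0 < G.P z n from this w hc.mem_srcSet
  induction n with
  | zero => intro z _; rw [P_zero]; exact one_pos
  | succ n ih =>
    rintro _ ⟨e, he, rfl⟩
    exact (ih _ (hc.tgt_mem_srcSet he)).trans_le (P_le_P_succ e n)

lemma P_le_one_add_sum_exits (hc : G.IsCycleAt w c) {z : G.V} (hz : z ∈ G.srcSet c) (n : ℕ) :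
    G.P z n ≤ 1 + ∑ e ∈ G.exits c, ∑ t ∈ range n, G.P (G.tgt e) t := by
  induction n generalizing z with
  | zero => simp [P_zero]
  | succ n ih =>
    obtain ⟨g, hg, rfl⟩ := hz
    have hsub : (Finset.univ.filter fun e => G.src e = G.src g).erase g ⊆ G.exits c := by
      intro e he
      obtain ⟨hne, he⟩ := mem_erase.1 he
      have hsrc := (mem_filter.1 he).2
      exact mem_exits.2 ⟨⟨g, hg, hsrc.symm⟩, fun hec => hne (hc.eq_of_mem_of_src_eq hec hg hsrc)⟩
    calc G.P (G.src g) (n + 1)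
        = G.P (G.tgt g) n + ∑ e ∈ (Finset.univ.filter fun e => G.src e = G.src g).erase g,
            G.P (G.tgt e) n := by rw [P_succ]; exact (add_sum_erase _ _ (by simp)).symm
      _ ≤ (1 + ∑ e ∈ G.exits c, ∑ t ∈ range n, G.P (G.tgt e) t) +
            ∑ e ∈ G.exits c, G.P (G.tgt e) n :=
          add_le_add (ih (hc.tgt_mem_srcSet hg)) (sum_le_sum_of_subset hsub)
      _ = 1 + ∑ e ∈ G.exits c, ∑ t ∈ range (n + 1), G.P (G.tgt e) t := by
          simp only [sum_range_succ, sum_add_distrib]; ring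

lemma P_add_P_le {f e : G.E} {r : List G.E} (hc : G.IsCycleAt w (f :: r)) (he : G.src e = w)
    (hef : e ≠ f) (m : ℕ) :
    G.P w m + G.P (G.tgt e) (m + r.length) ≤ G.P w (m + (r.length + 1)) := by
  obtain ⟨hf, hr⟩ := path_cons_iff.1 hc.2.1
  calc G.P w m + G.P (G.tgt e) (m + r.length)
      ≤ G.P (G.tgt f) (m + r.length) + G.P (G.tgt e) (m + r.length) := by
        gcongr; simpa [add_comm] using P_le_P_append hr m
    _ ≤ G.P w (m + (r.length + 1)) := by
        rw [add_comm, ← add_assoc, ← he]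
        exact P_add_P_le_P_succ (he.trans hf) hef _

end IsCycleAt

section UniqueCycles

variable {v : G.V}
  (hdisj : ∀ w : G.V, G.Reaches v w →
    ∀ c₁ c₂ : List G.E, G.IsCycleAt w c₁ → G.IsCycleAt w c₂ → c₁ = c₂)
include hdisj

lemma cyclesThrough_subsingleton {x : G.V} (hx : G.Reaches v x) :
    (G.cyclesThrough x).Subsingleton := by
  rintro _ ⟨⟨_, c₁, hc₁, rfl⟩, hx₁⟩ _ ⟨⟨_, c₂, hc₂, rfl⟩, hx₂⟩
  obtain ⟨c₁', hc₁', hperm₁⟩ := hc₁.rotate hx₁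
  obtain ⟨c₂', hc₂', hperm₂⟩ := hc₂.rotate hx₂
  obtain rfl := hdisj x hx _ _ hc₁' hc₂'
  exact (srcSet_perm hperm₁).symm.trans (srcSet_perm hperm₂)

lemma mem_of_reaches_src {e : G.E} {c : List G.E} (hx : G.Reaches v (G.src e))
    (hc : G.IsCycleAt (G.src e) c) (h : G.Reaches (G.tgt e) (G.src e)) : e ∈ c := by
  obtain ⟨q, hq⟩ := h
  obtain ⟨r, hr⟩ := exists_isCycleAt_cons (.cons e hq)
  rw [hdisj _ hx _ _ hc hr]
  exact List.mem_cons_self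

lemma cyclesMet_cons_of_not_reaches {e : G.E} {c p : List G.E} {y : G.V}
    (hx : G.Reaches v (G.src e)) (hc : G.IsCycleAt (G.src e) c)
    (hnr : ¬ G.Reaches (G.tgt e) (G.src e)) (hp : G.Path (G.tgt e) y p) :
    G.cyclesMet (G.src e) (e :: p) = G.cyclesMet (G.tgt e) p + 1 := by
  have hthrough : G.cyclesThrough (G.src e) = {G.srcSet c} :=
    (cyclesThrough_subsingleton hdisj hx).eq_singleton_of_mem ⟨hc.isCycleSet, hc.mem_srcSet⟩
  have hnotmem : G.srcSet c ∉ G.metSet (G.tgt e) p := fun ⟨_, _, hzc, hzp⟩ =>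
    hnr ((reaches_of_mem_visits hp hzp).trans (hc.reaches_base hzc))
  rw [cyclesMet_eq_ncard, cyclesMet_eq_ncard, metSet_cons, hthrough, Set.singleton_union,
    Set.ncard_insert_of_notMem hnotmem]

lemma cyclesMet_cons_of_reaches {e : G.E} {p : List G.E} (hx : G.Reaches v (G.src e))
    (h : ∀ c, G.IsCycleAt (G.src e) c → G.Reaches (G.tgt e) (G.src e)) :
    G.cyclesMet (G.src e) (e :: p) = G.cyclesMet (G.tgt e) p := by
  have hsub : G.cyclesThrough (G.src e) ⊆ G.metSet (G.tgt e) p := by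
    rintro _ ⟨⟨w, c, hc, rfl⟩, hs⟩
    obtain ⟨c', hc', hperm⟩ := hc.rotate hs
    refine ⟨⟨w, c, hc, rfl⟩, G.tgt e, ?_, Set.mem_insert _ _⟩
    show G.tgt e ∈ G.srcSet c
    rw [← srcSet_perm hperm]
    exact hc'.tgt_mem_srcSet (mem_of_reaches_src hdisj hx hc' (h c' hc'))
  rw [cyclesMet_eq_ncard, cyclesMet_eq_ncard, metSet_cons, Set.union_eq_right.2 hsub]

lemma maxCyclesMet_tgt_lt {e : G.E} {c : List G.E} (hx : G.Reaches v (G.src e))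
    (hc : G.IsCycleAt (G.src e) c) (hnr : ¬ G.Reaches (G.tgt e) (G.src e)) :
    G.maxCyclesMet (G.tgt e) < G.maxCyclesMet (G.src e) := by
  obtain ⟨p, y, hp, hmax⟩ := exists_cyclesMet_eq_maxCyclesMet (G.tgt e)
  calc G.maxCyclesMet (G.tgt e) < G.cyclesMet (G.tgt e) p + 1 := by omega
    _ = G.cyclesMet (G.src e) (e :: p) := (cyclesMet_cons_of_not_reaches hdisj hx hc hnr hp).symm
    _ ≤ G.maxCyclesMet (G.src e) := cyclesMet_le_maxCyclesMet (.cons e hp)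

lemma not_reaches_src_of_mem_exits {w : G.V} {c : List G.E} {e : G.E} (hw : G.Reaches v w)
    (hc : G.IsCycleAt w c) (he : e ∈ G.exits c) : ¬ G.Reaches (G.tgt e) (G.src e) := by
  obtain ⟨hsrc, hec⟩ := mem_exits.1 he
  obtain ⟨c', hc', hperm⟩ := hc.rotate hsrc
  exact fun h =>
    hec (hperm.mem_iff.1 (mem_of_reaches_src hdisj (hw.trans (hc.base_reaches hsrc)) hc' h))

lemma not_reaches_of_mem_exits {w : G.V} {c : List G.E} {e : G.E} (hw : G.Reaches v w)
    (hc : G.IsCycleAt w c) (he : e ∈ G.exits c) : ¬ G.Reaches (G.tgt e) w := fun h =>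
  not_reaches_src_of_mem_exits hdisj hw hc he (h.trans (hc.base_reaches (mem_exits.1 he).1))

lemma maxCyclesMet_lt_of_mem_exits {w : G.V} {c : List G.E} {e : G.E} (hw : G.Reaches v w)
    (hc : G.IsCycleAt w c) (he : e ∈ G.exits c) :
    G.maxCyclesMet (G.tgt e) < G.maxCyclesMet w := by
  have hwe := hc.base_reaches (mem_exits.1 he).1
  obtain ⟨c', hc', -⟩ := hc.rotate (mem_exits.1 he).1
  exact (maxCyclesMet_tgt_lt hdisj (hw.trans hwe) hc'
    (not_reaches_src_of_mem_exits hdisj hw hc he)).trans_le (maxCyclesMet_le_of_reaches hwe)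

theorem polyBoundedBelow_P {w y : G.V} {p : List G.E} {j : ℕ} (hw : G.Reaches v w)
    (hp : G.Path w y p) (hj : G.cyclesMet w p = j + 1) : PolyBoundedBelow (G.P w) j := by
  induction p generalizing w j with
  | nil =>
    rw [cyclesMet_eq_ncard, metSet_nil] at hj
    obtain ⟨_, ⟨_, c, hc, rfl⟩, hwc⟩ := Set.nonempty_of_ncard_ne_zero (s := G.cyclesThrough w)
      (by omega)
    obtain rfl : j = 0 := by
      have := Set.ncard_le_one_iff_subsingleton.2 (cyclesThrough_subsingleton hdisj hw)
      omega
    obtain ⟨c', hc', -⟩ := hc.rotate hwc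
    exact polyBoundedBelow_zero_of_pos hc'.P_pos
  | cons e p ih =>
    obtain ⟨rfl, htl⟩ := path_cons_iff.1 hp
    have hv : G.Reaches v (G.tgt e) := hw.trans (reaches_tgt e)
    by_cases hexit : ∃ c, G.IsCycleAt (G.src e) c ∧ ¬ G.Reaches (G.tgt e) (G.src e)
    · obtain ⟨c, hc, hnr⟩ := hexit
      rw [cyclesMet_cons_of_not_reaches hdisj hw hc hnr htl] at hj
      cases j with
      | zero => exact polyBoundedBelow_zero_of_pos hc.P_pos
      | succ j =>
        obtain ⟨f, r, rfl⟩ := List.exists_cons_of_ne_nil hc.1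
        have hef : e ≠ f := by
          rintro rfl
          exact hnr (hc.reaches_base (hc.tgt_mem_srcSet List.mem_cons_self))
        exact (ih hv htl (by omega)).pump (hc.P_add_P_le rfl hef)
    · push Not at hexit
      rw [cyclesMet_cons_of_reaches hdisj hw hexit] at hj
      exact (ih hv htl hj).of_le_succ (P_le_P_succ e)

theorem polyBoundedAbove_P {w : G.V} (hw : G.Reaches v w) :
    PolyBoundedAbove (G.P w) (G.maxCyclesMet w - 1) := by
  by_cases hcyc : ∃ c, G.IsCycleAt w c
  · obtain ⟨c, hc⟩ := hcyc
    refine ((PolyBoundedAbove.const 1 _).add (PolyBoundedAbove.sum fun e he => ?_)).mono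
      (hc.P_le_one_add_sum_exits hc.mem_srcSet) le_rfl
    have hwu : G.Reaches w (G.tgt e) :=
      (hc.base_reaches (mem_exits.1 he).1).trans (reaches_tgt e)
    have hdec := ncard_reaches_lt hwu (not_reaches_of_mem_exits hdisj hw hc he)
    have hlt := maxCyclesMet_lt_of_mem_exits hdisj hw hc he
    rcases Nat.eq_zero_or_pos (G.maxCyclesMet (G.tgt e)) with h0 | hpos
    · exact (polyBoundedAbove_sum_range_P_of_maxCyclesMet_eq_zero h0).mono (fun _ => le_rfl)
        (Nat.zero_le _)
    · exact (polyBoundedAbove_P (hw.trans hwu)).sum_range.mono (fun _ => le_rfl) (by omega)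
  · push Not at hcyc
    refine PolyBoundedAbove.of_succ ((PolyBoundedAbove.sum fun e he => ?_).mono
      (fun n => (P_succ w n).le) le_rfl)
    have hsrc : G.src e = w := (mem_filter.1 he).2
    have hwu : G.Reaches w (G.tgt e) := hsrc ▸ reaches_tgt e
    have hdec := ncard_reaches_lt hwu fun ⟨q, hq⟩ =>
      hcyc _ (exists_isCycleAt_cons (path_cons_iff.2 ⟨hsrc.symm, hq⟩)).choose_spec
    exact (polyBoundedAbove_P (hw.trans hwu)).mono (fun _ => le_rfl)
      (Nat.sub_le_sub_right (maxCyclesMet_le_of_reaches hwu) 1)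
termination_by {x | G.Reaches w x}.ncard
decreasing_by all_goals exact hdec

end UniqueCycles

end DMGraph

/-- Suppose no vertex reachable from `v` has two different cycles passing
through it.  If some path starting at `v` intersects `d + 1` cycles and every path starting
at `v` intersects at most `d + 1` cycles, then there are constants `C > D > 0` with
`D * n ^ d ≤ P(v,n) ≤ C * n ^ d` for all sufficiently large `n`.  If no path starting at
`v` intersects any cycle, then `P(v,n) = 0` for all sufficiently large `n`. -/
theorem stmt3 (G : DMGraph) (v : G.V)
    (hdisj : ∀ w : G.V, G.Reaches v w →
      ∀ c₁ c₂ : List G.E, G.IsCycleAt w c₁ → G.IsCycleAt w c₂ → c₁ = c₂) :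
    (∀ d : ℕ,
      (∃ (p : List G.E) (w : G.V), G.Path v w p ∧ G.cyclesMet v p = d + 1) →
      (∀ (p : List G.E) (w : G.V), G.Path v w p → G.cyclesMet v p ≤ d + 1) →
      ∃ C D : ℝ, C > D ∧ D > 0 ∧
        ∀ᶠ n : ℕ in Filter.atTop,
          D * (n : ℝ) ^ d ≤ (G.P v n : ℝ) ∧ (G.P v n : ℝ) ≤ C * (n : ℝ) ^ d)
    ∧
    ((∀ (p : List G.E) (w : G.V), G.Path v w p → G.cyclesMet v p = 0) →
      ∀ᶠ n : ℕ in Filter.atTop, G.P v n = 0) := by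
  refine ⟨fun d ⟨p, w, hp, hd⟩ hle => ?_, fun h0 => ?_⟩
  · have hmax : G.maxCyclesMet v = d + 1 :=
      le_antisymm (DMGraph.maxCyclesMet_le hle) (hd ▸ DMGraph.cyclesMet_le_maxCyclesMet hp)
    have hup := DMGraph.polyBoundedAbove_P hdisj (.refl v)
    rw [hmax, Nat.add_sub_cancel] at hup
    exact exists_bounds_of_polyBounded hup (DMGraph.polyBoundedBelow_P hdisj (.refl v) hp hd)
  · exact eventually_gt_atTop _ |>.mono fun n hn => DMGraph.P_eq_zero_of_cyclesMet_eq_zero h0 hn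
end

section
/- Let G be a finite directed multigraph and v a periodic vertex of G. Let γ be a recurrent path starting at v of length m ≥ 0. Then for every n > m, γ has at least one extension to a recurrent path of length n starting at v. Moreover, if P(v,n) grows at most polynomially in n (i.e., there exist constants C > 0 and d ≥ 0 with P(v,n) ≤ C·n^d for all n ≥ 1), then for each n > m this recurrent extension of γ is unique. -/
namespace DMGraph

/-- A path `p` starting at the periodic vertex `v` is recurrent if there is a path
from its terminal vertex back to `v`. -/
def RecurrentFrom (G : DMGraph) (v : G.V) (p : List G.E) : Prop :=
  ∃ w : G.V, G.Path v w p ∧ G.Reaches w v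

end DMGraph

/-!
Two distinct recurrent paths `γ₁ ≠ γ₂` of the same length, with ways `qᵢ` back to `v`, give two
distinct closed walks `γ₁ q₁ γ₂ q₂ ≠ γ₂ q₂ γ₁ q₁` at `v` of a common length `L`; concatenating
them along the `2 ^ k` words of length `k` yields `2 ^ k` distinct paths of length `k L` from `v`,
so `P(v, ·)` grows exponentially. Existence is easier: follow the way back to `v` and then wind
around a long enough cycle through `v`.
-/

namespace List

theorem length_flatMap_of_length_eq {α β : Type*} {f : α → List β} {L : ℕ}
    (hf : ∀ a, (f a).length = L) (l : List α) : (l.flatMap f).length = l.length * L := by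
  simp [List.length_flatMap, hf]

theorem flatMap_inj_of_length_eq {α β : Type*} {f : α → List β} (hf : Function.Injective f)
    (hL : ∀ a b, (f a).length = (f b).length) :
    ∀ {l₁ l₂ : List α}, l₁.length = l₂.length → l₁.flatMap f = l₂.flatMap f → l₁ = l₂
  | [], [], _, _ => rfl
  | a :: l₁, b :: l₂, hlen, h => by
    rw [flatMap_cons, flatMap_cons] at h
    obtain ⟨hab, htail⟩ := append_inj h (hL a b)
    rw [hf hab, flatMap_inj_of_length_eq hf hL (by simpa using hlen) htail]

end List

theorem exists_const_mul_pow_lt_two_pow (A : ℝ) (d : ℕ) :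
    ∃ k : ℕ, 0 < k ∧ A * (k : ℝ) ^ d < 2 ^ k := by
  have hA : (0 : ℝ) < 1 / (|A| + 1) := by positivity
  obtain ⟨k, hk, hsmall⟩ := ((Filter.eventually_gt_atTop 0).and
    ((tendsto_pow_const_div_const_pow_of_one_lt d one_lt_two).eventually
      (gt_mem_nhds hA))).exists
  refine ⟨k, hk, ?_⟩
  rw [div_lt_div_iff₀ (by positivity) (by positivity), one_mul] at hsmall
  calc A * (k : ℝ) ^ d ≤ |A| * (k : ℝ) ^ d := by gcongr; exact le_abs_self A
    _ < (k : ℝ) ^ d * (|A| + 1) := by nlinarith [pow_pos (Nat.cast_pos.mpr hk : (0 : ℝ) < k) d]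
    _ < 2 ^ k := hsmall

namespace DMGraph

variable {G : DMGraph}

theorem Path.append_s4 {v w u : G.V} {p q : List G.E} (h : G.Path v w p) (h' : G.Path w u q) :
    G.Path v u (p ++ q) := by
  induction h with
  | nil => exact h'
  | cons e _ ih => exact Path.cons e (ih h')

theorem Path.take_drop {v w : G.V} {p : List G.E} (h : G.Path v w p) (j : ℕ) :
    ∃ u, G.Path v u (p.take j) ∧ G.Path u w (p.drop j) := by
  induction h generalizing j with
  | nil v => exact ⟨v, by cases j <;> exact ⟨Path.nil v, Path.nil v⟩⟩
  | cons e h ih =>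
    cases j with
    | zero => exact ⟨_, Path.nil _, Path.cons e h⟩
    | succ j =>
      obtain ⟨u, h₁, h₂⟩ := ih j
      exact ⟨u, Path.cons e h₁, h₂⟩

theorem Path.flatMap {α : Type*} {v : G.V} {f : α → List G.E} {l : List α}
    (h : ∀ a ∈ l, G.Path v v (f a)) : G.Path v v (l.flatMap f) := by
  induction l with
  | nil => exact Path.nil v
  | cons a l ih =>
    rw [List.flatMap_cons]
    exact (h a (by simp)).append_s4 (ih fun x hx => h x (by simp [hx]))

theorem exists_closed_walk_length_ge {v : G.V} (hper : ∃ c : List G.E, c ≠ [] ∧ G.Path v v c)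
    (N : ℕ) : ∃ c : List G.E, N ≤ c.length ∧ G.Path v v c := by
  obtain ⟨c, hne, hc⟩ := hper
  induction N with
  | zero => exact ⟨[], le_rfl, Path.nil v⟩
  | succ N ih =>
    obtain ⟨c', hlen, hc'⟩ := ih
    have := List.length_pos_of_ne_nil hne
    exact ⟨c ++ c', by simp only [List.length_append]; omega, hc.append_s4 hc'⟩

theorem RecurrentFrom.exists_extension {v : G.V}
    (hper : ∃ c : List G.E, c ≠ [] ∧ G.Path v v c) {γ : List G.E} (hγ : G.RecurrentFrom v γ)
    {n : ℕ} (hn : γ.length ≤ n) :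
    ∃ γ' : List G.E, γ'.length = n ∧ γ <+: γ' ∧ G.RecurrentFrom v γ' := by
  obtain ⟨w, hγ, q, hq⟩ := hγ
  obtain ⟨c, hc, hcv⟩ := exists_closed_walk_length_ge hper n
  obtain ⟨u, htake, hdrop⟩ := (hq.append_s4 hcv).take_drop (n - γ.length)
  refine ⟨γ ++ (q ++ c).take (n - γ.length), ?_, List.prefix_append _ _,
    u, hγ.append_s4 htake, _, hdrop⟩
  simp only [List.length_append, List.length_take]
  omega

theorem finite_paths (v : G.V) (n : ℕ) :
    Finite {p : List G.E // p.length = n ∧ ∃ w, G.Path v w p} :=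
  ((List.finite_length_eq G.E n).subset fun _ hp => hp.1).to_subtype

theorem two_pow_le_P {v : G.V} {D₁ D₂ : List G.E} (h₁ : G.Path v v D₁) (h₂ : G.Path v v D₂)
    (hlen : D₁.length = D₂.length) (hne : D₁ ≠ D₂) (k : ℕ) :
    2 ^ k ≤ G.P v (k * D₁.length) := by
  have := finite_paths (G := G) v (k * D₁.length)
  let block : Bool → List G.E := fun b => cond b D₁ D₂
  have hblock_len : ∀ b, (block b).length = D₁.length := by
    rintro (_ | _) <;> simp [block, hlen]
  have hblock_inj : Function.Injective block := by
    rintro (_ | _) (_ | _) h <;> simp_all [block, eq_comm]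
  let word : List.Vector Bool k → {p : List G.E // p.length = k * D₁.length ∧ ∃ w, G.Path v w p} :=
    fun bs => ⟨bs.1.flatMap block, by rw [List.length_flatMap_of_length_eq hblock_len, bs.2],
      v, Path.flatMap fun b _ => by cases b <;> assumption⟩
  have hword : Function.Injective word := fun bs bs' h =>
    Subtype.ext <| List.flatMap_inj_of_length_eq hblock_inj
      (fun a b => (hblock_len a).trans (hblock_len b).symm) (bs.2.trans bs'.2.symm)
      (congrArg Subtype.val h)
  calc 2 ^ k = Nat.card (List.Vector Bool k) := by simp [Nat.card_eq_fintype_card, card_vector]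
    _ ≤ G.P v (k * D₁.length) := Nat.card_le_card_of_injective word hword

theorem exists_two_pow_le_P_of_ne {v : G.V} {γ₁ γ₂ : List G.E} (h₁ : G.RecurrentFrom v γ₁)
    (h₂ : G.RecurrentFrom v γ₂) (hlen : γ₁.length = γ₂.length) (hne : γ₁ ≠ γ₂) :
    ∃ L, 0 < L ∧ ∀ k, 2 ^ k ≤ G.P v (k * L) := by
  obtain ⟨_, hγ₁, q₁, hq₁⟩ := h₁
  obtain ⟨_, hγ₂, q₂, hq₂⟩ := h₂
  set c₁ := γ₁ ++ q₁
  set c₂ := γ₂ ++ q₂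
  have hc₁ : G.Path v v c₁ := hγ₁.append_s4 hq₁
  have hc₂ : G.Path v v c₂ := hγ₂.append_s4 hq₂
  have hD : c₁ ++ c₂ ≠ c₂ ++ c₁ := by
    intro h
    have hpre₁ : γ₁ <+: c₂ ++ c₁ := h ▸ (List.prefix_append γ₁ q₁).trans (List.prefix_append _ _)
    have hpre₂ : γ₂ <+: c₂ ++ c₁ := (List.prefix_append γ₂ q₂).trans (List.prefix_append _ _)
    exact hne ((List.prefix_of_prefix_length_le hpre₁ hpre₂ hlen.le).eq_of_length hlen)
  refine ⟨(c₁ ++ c₂).length, ?_, two_pow_le_P (hc₁.append_s4 hc₂) (hc₂.append_s4 hc₁)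
    (by simp [Nat.add_comm]) hD⟩
  exact List.length_pos_of_ne_nil fun h => hD (by simp_all)

theorem eq_of_recurrentFrom_of_P_le {v : G.V} {C : ℝ} {d : ℕ}
    (hP : ∀ n : ℕ, 1 ≤ n → (G.P v n : ℝ) ≤ C * (n : ℝ) ^ d) {γ₁ γ₂ : List G.E}
    (h₁ : G.RecurrentFrom v γ₁) (h₂ : G.RecurrentFrom v γ₂) (hlen : γ₁.length = γ₂.length) :
    γ₁ = γ₂ := by
  by_contra hne
  obtain ⟨L, hL, hexp⟩ := exists_two_pow_le_P_of_ne h₁ h₂ hlen hne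
  obtain ⟨k, hk, hlt⟩ := exists_const_mul_pow_lt_two_pow (C * (L : ℝ) ^ d) d
  have hle : (2 : ℝ) ^ k ≤ C * (L : ℝ) ^ d * (k : ℝ) ^ d :=
    calc (2 : ℝ) ^ k ≤ G.P v (k * L) := by exact_mod_cast hexp k
      _ ≤ C * ((k * L : ℕ) : ℝ) ^ d := hP _ (Nat.one_le_iff_ne_zero.mpr (by positivity))
      _ = C * (L : ℝ) ^ d * (k : ℝ) ^ d := by push_cast; ring
  exact hle.not_gt hlt

end DMGraph

/-- Let `v` be a periodic vertex (i.e. contained in a cycle) of a finite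
directed multigraph `G` and let `γ` be a recurrent path starting at `v`.  Then for every
`n > length γ` there is an extension of `γ` to a recurrent path of length `n`; moreover,
if `P(v,·)` grows at most polynomially, this recurrent extension is unique. -/
theorem stmt4 (G : DMGraph) (v : G.V)
    (hper : ∃ c : List G.E, c ≠ [] ∧ G.Path v v c)
    (γ : List G.E) (hγ : G.RecurrentFrom v γ) :
    (∀ n : ℕ, γ.length < n →
      ∃ γ' : List G.E, γ'.length = n ∧ γ <+: γ' ∧ G.RecurrentFrom v γ')
    ∧
    ((∃ C : ℝ, 0 < C ∧ ∃ d : ℕ, ∀ n : ℕ, 1 ≤ n → (G.P v n : ℝ) ≤ C * (n : ℝ) ^ d) →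
      ∀ n : ℕ, γ.length < n →
        ∀ γ₁ γ₂ : List G.E,
          γ₁.length = n → γ <+: γ₁ → G.RecurrentFrom v γ₁ →
          γ₂.length = n → γ <+: γ₂ → G.RecurrentFrom v γ₂ → γ₁ = γ₂) := by
  refine ⟨fun n hn => hγ.exists_extension hper hn.le, ?_⟩
  rintro ⟨C, -, d, hP⟩ n - γ₁ γ₂ hlen₁ - h₁ hlen₂ - h₂
  exact DMGraph.eq_of_recurrentFrom_of_P_le hP h₁ h₂ (hlen₁.trans hlen₂.symm)
end
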